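/- Let G be a second countable locally compact Hausdorff abelian group, H a countable uniform lattice in G, and F ∈ L²(Γ), where Γ is the dual group of G with Haar measure m_Γ. If the closed linear span S of {E_h F : h ∈ H} satisfies E_x S ⊆ S for every x ∈ G, then for any measurable section Ω of Γ/H* one has m_Γ({γ ∈ Γ : F(γ) ≠ 0}) ≤ m_Γ(Ω). -/

import Mathlib

/-!
Every function in the closed span of the modulations `E_h F`, `h ∈ H`, has the form `p · F` with
`p` periodic under the annihilator `H*`. Modulations by all of `G` stay in this span, and `E_x`
multiplies by the character `(x, ·)`, which is not `σ`-periodic when `(x, σ) ≠ 1`. Hence, for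
`σ ∈ H* \ {1}`, `F` and `F(· σ)` have a.e. disjoint supports: the translates of `{F ≠ 0}` by `H*`
do not overlap, and they pack into the fundamental domain `Ω`. This needs `H*` to be countable,
which holds because `G = K + H` with `K` compact, so distinct elements of `H*` are uniformly
separated on `K`.
-/

open MeasureTheory Multiplicative

/-- `ModulateMem mΓ x F S` says that the modulation `E_x F`, `(E_x F)(γ) = (x,γ)·F(γ)`,
belongs to the set `S ⊆ L²(Γ)`, where `Γ` is the Pontryagin dual of `G`. -/
def ModulateMem {G : Type*} [AddCommGroup G] [TopologicalSpace G]
    [MeasurableSpace (PontryaginDual (Multiplicative G))]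
    (mΓ : Measure (PontryaginDual (Multiplicative G))) (x : G)
    (F : Lp ℂ 2 mΓ) (S : Set (Lp ℂ 2 mΓ)) : Prop :=
  ∃ K ∈ S, (K : PontryaginDual (Multiplicative G) → ℂ) =ᵐ[mΓ]
    fun γ => (γ (ofAdd x) : ℂ) * (F : PontryaginDual (Multiplicative G) → ℂ) γ

open Filter Real
open scoped ENNReal Pointwise

theorem Circle.exists_pow_re_nonpos {z : Circle} (hz : z ≠ 1) :
    ∃ n : ℕ, ((z ^ n : Circle) : ℂ).re ≤ 0 := by
  set θ := |Complex.arg z|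
  have hθ : 0 < θ := abs_pos.2 (Circle.arg_eq_zero.not.2 hz)
  have hθπ : θ ≤ π := abs_le.2 ⟨(Complex.neg_pi_lt_arg _).le, Complex.arg_le_pi _⟩
  set n := ⌈π / 2 / θ⌉₊
  have hlow : π / 2 ≤ n * θ := (div_le_iff₀ hθ).1 (Nat.le_ceil _)
  have hup : n * θ < π / 2 + θ := by
    have := mul_lt_mul_of_pos_right (Nat.ceil_lt_add_one (by positivity : 0 ≤ π / 2 / θ)) hθ
    rwa [add_mul, div_mul_cancel₀ _ hθ.ne', one_mul] at this
  refine ⟨n, ?_⟩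
  rw [← Circle.exp_arg z, ← Circle.exp_natCast_mul, Circle.coe_exp, Complex.exp_ofReal_mul_I_re,
    ← Real.cos_abs, abs_mul, Nat.abs_cast]
  exact Real.cos_nonpos_of_pi_div_two_le_of_le hlow (by linarith)

theorem Complex.one_le_norm_sub_one {w : ℂ} (hw : w.re ≤ 0) : 1 ≤ ‖w - 1‖ :=
  calc (1 : ℝ) ≤ |(w - 1).re| := by
        rw [Complex.sub_re, Complex.one_re, abs_of_nonpos (by linarith)]
        linarith
    _ ≤ ‖w - 1‖ := Complex.abs_re_le_norm _

theorem IsOpenMap.exists_isCompact_image_eq_univ {X Y : Type*} [TopologicalSpace X]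
    [TopologicalSpace Y] [WeaklyLocallyCompactSpace X] [CompactSpace Y] {f : X → Y}
    (hf : IsOpenMap f) (hsurj : Function.Surjective f) :
    ∃ K : Set X, IsCompact K ∧ f '' K = Set.univ := by
  choose C hC hCx using fun x : X => exists_compact_mem_nhds x
  obtain ⟨t, ht⟩ := isCompact_univ.elim_finite_subcover (fun x => f '' interior (C x))
    (fun x => hf _ isOpen_interior) fun y _ => by
      obtain ⟨x, rfl⟩ := hsurj y
      exact Set.mem_iUnion.2 ⟨x, x, mem_interior_iff_mem_nhds.2 (hCx x), rfl⟩
  refine ⟨⋃ x ∈ t, C x, t.isCompact_biUnion fun x _ => hC x, Set.eq_univ_of_univ_subset ?_⟩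
  refine ht.trans (Set.iUnion₂_subset fun x hx => ?_)
  exact Set.image_mono (interior_subset.trans (Set.subset_biUnion_of_mem (u := C) hx))

theorem AddSubgroup.exists_isCompact_forall_exists_sub_mem {G : Type*} [AddCommGroup G]
    [TopologicalSpace G] [IsTopologicalAddGroup G] [WeaklyLocallyCompactSpace G]
    (H : AddSubgroup G) [CompactSpace (G ⧸ H)] :
    ∃ K : Set G, IsCompact K ∧ ∀ g : G, ∃ k ∈ K, g - k ∈ H := by
  obtain ⟨K, hK, hKH⟩ := QuotientAddGroup.isOpenMap_coe.exists_isCompact_image_eq_univ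
    (QuotientAddGroup.mk_surjective (s := H))
  refine ⟨K, hK, fun g => ?_⟩
  obtain ⟨k, hk, hkg⟩ := hKH.symm ▸ Set.mem_univ (g : G ⧸ H)
  exact ⟨k, hk, by simpa [neg_add_eq_sub] using QuotientAddGroup.eq.1 hkg⟩

namespace AddSubgroup

variable {G : Type*} [AddCommGroup G] [TopologicalSpace G]

def dualAnnihilator (H : AddSubgroup G) : Subgroup (PontryaginDual (Multiplicative G)) where
  carrier := {γ | ∀ h ∈ H, γ (ofAdd h) = 1}
  one_mem' _ _ := rfl
  mul_mem' {σ τ} hσ hτ h hh := show σ (ofAdd h) * τ (ofAdd h) = 1 by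
    rw [hσ h hh, hτ h hh, one_mul]
  inv_mem' {σ} hσ h hh := show (σ (ofAdd h))⁻¹ = 1 by rw [hσ h hh, inv_one]

theorem exists_re_nonpos_of_mem_dualAnnihilator {H : AddSubgroup G} {K : Set G}
    (hK : ∀ g : G, ∃ k ∈ K, g - k ∈ H) {δ : PontryaginDual (Multiplicative G)}
    (hδ : δ ∈ H.dualAnnihilator) (hδ1 : δ ≠ 1) : ∃ k ∈ K, ((δ (ofAdd k) : Circle) : ℂ).re ≤ 0 := by
  obtain ⟨a, ha⟩ := DFunLike.ne_iff.1 hδ1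
  obtain ⟨n, hn⟩ := Circle.exists_pow_re_nonpos ha
  obtain ⟨k, hk, hkH⟩ := hK (toAdd (a ^ n))
  refine ⟨k, hk, ?_⟩
  have hδk : δ (a ^ n) = δ (ofAdd k) * δ (ofAdd (toAdd (a ^ n) - k)) := by
    rw [← map_mul, ofAdd_sub, ofAdd_toAdd, mul_div_cancel]
  rwa [← map_pow, hδk, hδ _ hkH, mul_one] at hn

theorem countable_dualAnnihilator [IsTopologicalAddGroup G] [WeaklyLocallyCompactSpace G]
    [SecondCountableTopology G] (H : AddSubgroup G) [CompactSpace (G ⧸ H)] :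
    (H.dualAnnihilator : Set (PontryaginDual (Multiplicative G))).Countable := by
  obtain ⟨K, hK, hKH⟩ := H.exists_isCompact_forall_exists_sub_mem
  have : CompactSpace K := isCompact_iff_compactSpace.1 hK
  let restrict (γ : PontryaginDual (Multiplicative G)) : C(K, ℂ) :=
    ⟨fun k => γ (ofAdd k.1), continuous_subtype_val.comp
      ((map_continuous γ).comp (continuous_ofAdd.comp continuous_subtype_val))⟩
  have hsep : ∀ σ ∈ H.dualAnnihilator, ∀ τ ∈ H.dualAnnihilator, σ ≠ τ →
      1 ≤ dist (restrict σ) (restrict τ) := by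
    intro σ hσ τ hτ hστ
    obtain ⟨k, hk, hre⟩ := exists_re_nonpos_of_mem_dualAnnihilator hKH
      (div_mem hσ hτ) (div_ne_one.2 hστ)
    have hdiff : restrict σ ⟨k, hk⟩ - restrict τ ⟨k, hk⟩
        = ((σ / τ) (ofAdd k) - 1 : ℂ) * τ (ofAdd k) := by
      have hστk : ((σ / τ) (ofAdd k) : ℂ) = σ (ofAdd k) / τ (ofAdd k) := rfl
      simp only [restrict, ContinuousMap.coe_mk, hστk]
      field_simp
    calc (1 : ℝ) ≤ ‖((σ / τ) (ofAdd k) - 1 : ℂ)‖ := Complex.one_le_norm_sub_one hre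
      _ = dist (restrict σ ⟨k, hk⟩) (restrict τ ⟨k, hk⟩) := by
        rw [dist_eq_norm, hdiff, norm_mul, Circle.norm_coe, mul_one]
      _ ≤ dist (restrict σ) (restrict τ) := ContinuousMap.dist_apply_le_dist _
  refine Set.countable_of_injective_of_countable_image (f := restrict)
    (fun σ hσ τ hτ h => not_not.1 fun hne =>
      (hsep σ hσ τ hτ hne).not_gt (by rw [h, dist_self]; exact one_pos)) ?_
  refine (HereditarilyLindelofSpace.isLindelof _).countable
    (DiscreteTopology.of_forall_le_dist one_pos ?_)
  rintro ⟨_, σ, hσ, rfl⟩ ⟨_, τ, hτ, rfl⟩ hne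
  exact hsep σ hσ τ hτ fun h => hne (by simp [h])

end AddSubgroup

section PeriodicMultiple

variable {Γ : Type*} [CommGroup Γ] [MeasurableSpace Γ] [MeasurableMul Γ] {μ : Measure Γ}
  [μ.IsMulLeftInvariant] {p : ℝ≥0∞}

theorem ae_comp_mul_right {P : Γ → Prop} (h : ∀ᵐ γ ∂μ, P γ) (σ : Γ) : ∀ᵐ γ ∂μ, P (γ * σ) :=
  (measurePreserving_mul_right μ σ).quasiMeasurePreserving.ae h

/-- Where `F` and `F (· * σ)` do not vanish, `W` lies in this submodule iff `W / F` is
`σ`-periodic. -/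
def periodicMultipleSubmodule (F : Lp ℂ p μ) (σ : Γ) : Submodule ℂ (Lp ℂ p μ) where
  carrier := {W | ∀ᵐ γ ∂μ, W γ * F (γ * σ) = W (γ * σ) * F γ}
  zero_mem' := by
    filter_upwards [Lp.coeFn_zero ℂ p μ, ae_comp_mul_right (Lp.coeFn_zero ℂ p μ) σ]
      with γ h₁ h₂
    change ((0 : Lp ℂ p μ) : Γ → ℂ) γ * _ = ((0 : Lp ℂ p μ) : Γ → ℂ) (γ * σ) * _
    rw [h₁, h₂, Pi.zero_apply, Pi.zero_apply, zero_mul, zero_mul]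
  add_mem' {W V} hW hV := by
    filter_upwards [hW, hV, Lp.coeFn_add W V, ae_comp_mul_right (Lp.coeFn_add W V) σ]
      with γ hWγ hVγ h₁ h₂
    simp only [h₁, h₂, Pi.add_apply]
    linear_combination hWγ + hVγ
  smul_mem' c W hW := by
    filter_upwards [hW, Lp.coeFn_smul c W, ae_comp_mul_right (Lp.coeFn_smul c W) σ]
      with γ hWγ h₁ h₂
    simp only [h₁, h₂, Pi.smul_apply, smul_eq_mul]
    linear_combination c * hWγ

theorem isClosed_periodicMultipleSubmodule [Fact (1 ≤ p)] (F : Lp ℂ p μ) (σ : Γ) :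
    IsClosed (periodicMultipleSubmodule F σ : Set (Lp ℂ p μ)) := by
  refine isClosed_of_closure_subset fun W hW => ?_
  obtain ⟨V, hV, hVW⟩ := mem_closure_iff_seq_limit.1 hW
  obtain ⟨ns, -, hae⟩ := (tendstoInMeasure_of_tendsto_Lp hVW).exists_seq_tendsto_ae
  filter_upwards [hae, ae_comp_mul_right hae σ, ae_all_iff.2 fun i => hV (ns i)]
    with γ hγ hγσ hVγ
  exact tendsto_nhds_unique ((hγ.mul_const _).congr hVγ) (hγσ.mul_const _)

theorem mem_periodicMultipleSubmodule_of_ae_eq_mul {F W : Lp ℂ p μ} {σ : Γ} {χ : Γ → ℂ}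
    (hχ : ∀ γ, χ (γ * σ) = χ γ) (hW : W =ᵐ[μ] fun γ => χ γ * F γ) :
    W ∈ periodicMultipleSubmodule F σ := by
  filter_upwards [hW, ae_comp_mul_right hW σ] with γ h₁ h₂
  rw [h₁, h₂, hχ]
  ring

theorem ae_mul_right_eq_of_mem_periodicMultipleSubmodule {F W : Lp ℂ p μ} {σ : Γ} {χ : Γ → ℂ}
    (hW : W ∈ periodicMultipleSubmodule F σ) (hWχ : W =ᵐ[μ] fun γ => χ γ * F γ) :
    ∀ᵐ γ ∂μ, F γ ≠ 0 → F (γ * σ) ≠ 0 → χ (γ * σ) = χ γ := by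
  filter_upwards [hW, hWχ, ae_comp_mul_right hWχ σ] with γ hγ h₁ h₂ hF hFσ
  rw [h₁, h₂] at hγ
  have : (χ (γ * σ) - χ γ) * (F γ * F (γ * σ)) = 0 := by linear_combination -hγ
  exact sub_eq_zero.1 ((mul_eq_zero.1 this).resolve_right (mul_ne_zero hF hFσ))

end PeriodicMultiple

section FundamentalDomain

variable {Γ : Type*} [CommGroup Γ] [MeasurableSpace Γ] {μ : Measure Γ}

theorem isFundamentalDomain_of_existsUnique_div_mem (L : Subgroup Γ) {Ω : Set Γ}
    (hΩm : NullMeasurableSet Ω μ) (hΩ : ∀ γ, ∃! ω, ω ∈ Ω ∧ γ / ω ∈ L) :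
    IsFundamentalDomain L Ω μ := by
  refine .mk' hΩm fun γ => ?_
  obtain ⟨ω, ⟨hωΩ, hωL⟩, hω⟩ := hΩ γ
  refine ⟨⟨ω / γ, by simpa using inv_mem hωL⟩, by simpa [Subgroup.smul_def] using hωΩ, ?_⟩
  rintro ⟨g, hg⟩ hgΩ
  have := hω (g * γ) ⟨hgΩ, by simpa using inv_mem hg⟩
  ext
  simp [← this]

theorem MeasureTheory.IsFundamentalDomain.measure_le_of_ae_disjoint_mul [MeasurableMul Γ]
    [μ.IsMulLeftInvariant]
    {L : Subgroup Γ} [Countable L] {Ω E : Set Γ} (hΩ : IsFundamentalDomain L Ω μ)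
    (hE : NullMeasurableSet E μ) (hd : ∀ σ ∈ L, σ ≠ 1 → μ {γ | γ ∈ E ∧ γ * σ ∈ E} = 0) :
    μ E ≤ μ Ω := by
  refine hΩ.measure_le_of_pairwise_disjoint hE fun g g' hgg' => ?_
  have hsub : (g • E ∩ g' • E : Set Γ) ⊆
      (fun γ => (g : Γ)⁻¹ * γ) ⁻¹' {γ | γ ∈ E ∧ γ * (g / g' : Γ) ∈ E} := by
    rintro γ ⟨hγ, hγ'⟩
    rw [Set.mem_smul_set_iff_inv_smul_mem, Subgroup.smul_def, smul_eq_mul] at hγ hγ'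
    refine ⟨by simpa using hγ, ?_⟩
    convert hγ' using 1
    simp only [Subgroup.coe_inv, div_eq_mul_inv]
    rw [mul_comm (g : Γ)⁻¹ γ, mul_assoc, inv_mul_cancel_left, mul_comm]
  have hσ : (g / g' : Γ) ≠ 1 := div_ne_one.2 fun h => hgg' (Subtype.ext h)
  have hdisj : AEDisjoint μ (g • E) (g' • E) := measure_mono_null hsub
    (by rw [measure_preimage_mul]; exact hd _ (div_mem g.2 g'.2) hσ)
  exact hdisj.mono Set.inter_subset_left Set.inter_subset_left

end FundamentalDomain

section Modulation

variable {G : Type*} [AddCommGroup G] [TopologicalSpace G]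
  [MeasurableSpace (PontryaginDual (Multiplicative G))]
  {μ : Measure (PontryaginDual (Multiplicative G))} {p : ℝ≥0∞}

def modulations (H : AddSubgroup G) (F : Lp ℂ p μ) : Set (Lp ℂ p μ) :=
  {K | ∃ h ∈ H, (K : PontryaginDual (Multiplicative G) → ℂ) =ᵐ[μ]
    fun γ => (γ (ofAdd h) : ℂ) * (F : PontryaginDual (Multiplicative G) → ℂ) γ}

theorem mem_closure_span_modulations [Fact (1 ≤ p)] (H : AddSubgroup G) (F : Lp ℂ p μ) :
    F ∈ (Submodule.span ℂ (modulations H F)).topologicalClosure :=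
  Submodule.le_topologicalClosure _ <| Submodule.subset_span
    ⟨0, H.zero_mem, Eventually.of_forall fun γ => by simp⟩

theorem measure_support_inter_mul_eq_zero [BorelSpace (PontryaginDual (Multiplicative G))]
    [μ.IsMulLeftInvariant] [Fact (1 ≤ p)]
    {H : AddSubgroup G} {F K : Lp ℂ p μ} {σ : PontryaginDual (Multiplicative G)}
    (hσ : σ ∈ H.dualAnnihilator) {a : G} (ha : σ (ofAdd a) ≠ 1)
    (hK : K ∈ (Submodule.span ℂ (modulations H F)).topologicalClosure)
    (hKa : (K : PontryaginDual (Multiplicative G) → ℂ) =ᵐ[μ]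
      fun γ => (γ (ofAdd a) : ℂ) * (F : PontryaginDual (Multiplicative G) → ℂ) γ) :
    μ {γ | F γ ≠ 0 ∧ F (γ * σ) ≠ 0} = 0 := by
  have hperiodic : (Submodule.span ℂ (modulations H F)).topologicalClosure
      ≤ periodicMultipleSubmodule F σ := by
    refine Submodule.topologicalClosure_minimal _ (Submodule.span_le.2 ?_)
      (isClosed_periodicMultipleSubmodule F σ)
    rintro W ⟨h, hh, hW⟩
    refine mem_periodicMultipleSubmodule_of_ae_eq_mul (fun γ => ?_) hW
    rw [show (γ * σ) (ofAdd h) = γ (ofAdd h) * σ (ofAdd h) from rfl, hσ h hh, mul_one]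
  refine measure_mono_null ?_
    (ae_iff.1 (ae_mul_right_eq_of_mem_periodicMultipleSubmodule (hperiodic hK) hKa))
  rintro γ ⟨hF, hFσ⟩ hγ
  refine ha ?_
  have hγa : (γ (ofAdd a) : ℂ) * σ (ofAdd a) = γ (ofAdd a) * 1 := by
    rw [mul_one, ← Circle.coe_mul]
    exact hγ hF hFσ
  exact Circle.ext (by simpa using mul_left_cancel₀ (Circle.coe_ne_zero _) hγa)

end Modulation

theorem support_of_generator_of_G_invariant_space_general
    {G : Type*} [AddCommGroup G] [TopologicalSpace G] [IsTopologicalAddGroup G]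
    [LocallyCompactSpace G] [SecondCountableTopology G]
    [MeasurableSpace (PontryaginDual (Multiplicative G))]
    [BorelSpace (PontryaginDual (Multiplicative G))]
    (mΓ : Measure (PontryaginDual (Multiplicative G))) [mΓ.IsHaarMeasure]
    (H : AddSubgroup G)
    (hHcompact : CompactSpace (G ⧸ H))
    (F : Lp ℂ 2 mΓ)
    (S : Submodule ℂ (Lp ℂ 2 mΓ))
    (hS : S = (Submodule.span ℂ {K : Lp ℂ 2 mΓ | ∃ h ∈ H,
        (K : PontryaginDual (Multiplicative G) → ℂ) =ᵐ[mΓ]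
          fun γ => (γ (ofAdd h) : ℂ) * (F : PontryaginDual (Multiplicative G) → ℂ) γ
      }).topologicalClosure)
    (hGinv : ∀ x : G, ∀ K ∈ S, ModulateMem mΓ x K S)
    (Hstar : Set (PontryaginDual (Multiplicative G)))
    (hHstar : Hstar = {γ | ∀ h ∈ H, γ (ofAdd h) = 1})
    (Ω : Set (PontryaginDual (Multiplicative G)))
    (hΩmeas : MeasurableSet Ω)
    (hΩ : ∀ γ : PontryaginDual (Multiplicative G), ∃! ω, ω ∈ Ω ∧ γ / ω ∈ Hstar) :
    mΓ {γ | (F : PontryaginDual (Multiplicative G) → ℂ) γ ≠ 0} ≤ mΓ Ω := by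
  subst hS hHstar
  have : Countable H.dualAnnihilator := H.countable_dualAnnihilator.to_subtype
  have hΩL := isFundamentalDomain_of_existsUnique_div_mem (μ := mΓ) H.dualAnnihilator
    hΩmeas.nullMeasurableSet hΩ
  refine hΩL.measure_le_of_ae_disjoint_mul
    ((Lp.stronglyMeasurable F).measurable (measurableSet_singleton 0).compl).nullMeasurableSet
    fun σ hσ hσ1 => ?_
  obtain ⟨a, ha⟩ := DFunLike.ne_iff.1 hσ1
  obtain ⟨K, hK, hKa⟩ := hGinv (toAdd a) F (mem_closure_span_modulations H F)
  exact measure_support_inter_mul_eq_zero hσ ha hK hKa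

/-- if the closed linear span `S` of `{E_h F : h ∈ H}` in `L²(Γ)` is invariant
under `E_x` for every `x ∈ G`, then for any measurable section `Ω` of `Γ/H*` one has
`m_Γ({F ≠ 0}) ≤ m_Γ(Ω)`. -/
theorem support_of_generator_of_G_invariant_space
    {G : Type*} [AddCommGroup G] [TopologicalSpace G] [IsTopologicalAddGroup G]
    [LocallyCompactSpace G] [T2Space G] [SecondCountableTopology G]
    [MeasurableSpace (PontryaginDual (Multiplicative G))]
    [BorelSpace (PontryaginDual (Multiplicative G))]
    (mΓ : Measure (PontryaginDual (Multiplicative G))) [mΓ.IsHaarMeasure]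
    (H : AddSubgroup G) (hHcount : Countable H) (hHdiscrete : DiscreteTopology H)
    (hHcompact : CompactSpace (G ⧸ H))
    (F : Lp ℂ 2 mΓ)
    (S : Submodule ℂ (Lp ℂ 2 mΓ))
    (hS : S = (Submodule.span ℂ {K : Lp ℂ 2 mΓ | ∃ h ∈ H,
        (K : PontryaginDual (Multiplicative G) → ℂ) =ᵐ[mΓ]
          fun γ => (γ (ofAdd h) : ℂ) * (F : PontryaginDual (Multiplicative G) → ℂ) γ
      }).topologicalClosure)
    (hGinv : ∀ x : G, ∀ K ∈ S, ModulateMem mΓ x K S)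
    (Hstar : Set (PontryaginDual (Multiplicative G)))
    (hHstar : Hstar = {γ | ∀ h ∈ H, γ (ofAdd h) = 1})
    (Ω : Set (PontryaginDual (Multiplicative G)))
    (hΩmeas : MeasurableSet Ω) (hΩfin : mΓ Ω < ⊤)
    (hΩ : ∀ γ : PontryaginDual (Multiplicative G), ∃! ω, ω ∈ Ω ∧ γ / ω ∈ Hstar) :
    mΓ {γ | (F : PontryaginDual (Multiplicative G) → ℂ) γ ≠ 0} ≤ mΓ Ω :=
  support_of_generator_of_G_invariant_space_general mΓ H hHcompact F S hS hGinv Hstar hHstar Ω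
    hΩmeas hΩ
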